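/- Let r ≥ 2 and let k ∈ ℕ^r be of the form (k, 1, ..., 1, 2, 1, ..., 1) (a 2 in some position n with 2 ≤ n ≤ r and first entry k) or its reverse. Then a_r(k) ≥ k^r/(r−1)! and (2/r)·L(k−𝟙) ≤ k + r, where a_r is the Weyl dimension polynomial and L(k) := (1/2)·Σ_{j=1}^r j(r+1−j)k_j. -/

import Mathlib

/-!
Splitting off the row `ℓ = 1` of the product gives
`h_r(K, w) = (∏_j (K + w_1 + ⋯ + w_j)) · h_{r-1}(w)`, and every factor of that row is at least `K`.
For `w = 𝟙 + e_t` the same splitting, applied inductively, gives `h_s(w) ≥ (s + 1) · c_s`: while the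
`2` is not in front, the split-off row beats the one for `𝟙` by its last factor `s + 1` instead
of `s`; once it is in front, the row is `(s + 1)!` and what remains is `h_{s-1}(𝟙) = c_{s-1}`.
As `c_r = r! · c_{r-1}`, this gives `a_r(v) ≥ K^r/(r-1)!`. The height bound is the identity
`(2/r) L(v - 𝟙) = K - 1 + n(r + 1 - n)/r` together with `n(r + 1 - n) ≤ r(r + 1)`.
Reversed vectors reduce to these, since `h_r` and `L` are invariant under reversing the coordinates.
-/

open Finset

/-- `h_r(y) = ∏_{1 ≤ ℓ ≤ j ≤ r} (y_ℓ + ⋯ + y_j)`. -/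
noncomputable def hpoly (r : ℕ) (y : Fin r → ℝ) : ℝ :=
  ∏ p ∈ Finset.univ.filter (fun p : Fin r × Fin r => p.1 ≤ p.2),
    ∑ i ∈ Finset.Icc p.1 p.2, y i

/-- `c_r = r!(r-1)!⋯1!`. -/
def crconst (r : ℕ) : ℕ := ∏ i ∈ Finset.range r, Nat.factorial (i + 1)

/-- The Weyl dimension polynomial `a_r(k) = h_r(k)/c_r`. -/
noncomputable def apoly (r : ℕ) (y : Fin r → ℝ) : ℝ := hpoly r y / crconst r

/-- The height function `L(k) = (1/2) ∑_{j=1}^r j(r+1-j) k_j` (here `j` is 1-indexed). -/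
noncomputable def Lfun (r : ℕ) (k : Fin r → ℝ) : ℝ :=
  (1 / 2) * ∑ j : Fin r, ((j : ℕ) + 1 : ℝ) * ((r : ℝ) - (j : ℕ)) * k j

open Nat

lemma hpoly_eq_prod_prod (r : ℕ) (y : Fin r → ℝ) :
    hpoly r y = ∏ ℓ, ∏ j, if ℓ ≤ j then ∑ i ∈ Icc ℓ j, y i else 1 := by
  rw [hpoly, prod_filter, ← univ_product_univ, prod_product]

lemma hpoly_succ (r : ℕ) (y : Fin (r + 1) → ℝ) :
    hpoly (r + 1) y = (∏ j, ∑ i ∈ Icc 0 j, y i) * hpoly r (Fin.tail y) := by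
  rw [hpoly_eq_prod_prod, hpoly_eq_prod_prod, Fin.prod_univ_succ]
  congr 1
  refine prod_congr rfl fun ℓ _ => ?_
  rw [Fin.prod_univ_succ]
  simp [Fin.sum_Icc_succ, Fin.tail]

lemma hpoly_comp_rev (r : ℕ) (y : Fin r → ℝ) : hpoly r (fun i => y i.rev) = hpoly r y := by
  refine prod_nbij' (fun p => (p.2.rev, p.1.rev)) (fun p => (p.2.rev, p.1.rev))
    (by simp) (by simp) (by simp) (by simp) fun p _ => ?_
  rw [← Fin.map_revPerm_Icc, sum_map]
  simp

lemma apoly_comp_rev (r : ℕ) (y : Fin r → ℝ) : apoly r (fun i => y i.rev) = apoly r y := by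
  rw [apoly, apoly, hpoly_comp_rev]

lemma Lfun_comp_rev (r : ℕ) (k : Fin r → ℝ) : Lfun r (fun i => k i.rev) = Lfun r k := by
  rw [Lfun, Lfun, ← Equiv.sum_comp Fin.revPerm]
  congr 1
  refine sum_congr rfl fun j _ => ?_
  have hj := j.isLt
  simp only [Fin.revPerm_apply, Fin.rev_rev, Fin.val_rev]
  rw [Nat.cast_sub (by omega)]
  push_cast
  ring

lemma crconst_pos (r : ℕ) : 0 < crconst r := prod_pos fun _ _ => factorial_pos _

lemma crconst_succ (r : ℕ) : crconst (r + 1) = crconst r * (r + 1)! := prod_range_succ _ _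

lemma prod_fin_val_add_one_eq_factorial (n : ℕ) : ∏ j : Fin n, ((j : ℝ) + 1) = n ! := by
  rw [Fin.prod_univ_eq_prod_range (fun j => (j : ℝ) + 1), ← prod_range_add_one_eq_factorial]
  push_cast
  rfl

lemma hpoly_one (r : ℕ) : hpoly r 1 = crconst r := by
  induction r with
  | zero => simp [hpoly, crconst]
  | succ r ih =>
    have hrow (j : Fin (r + 1)) : ∑ _i ∈ Icc 0 j, (1 : ℝ) = j + 1 := by simp [Fin.card_Icc]
    rw [hpoly_succ, crconst_succ]
    simp only [Pi.one_apply, hrow, prod_fin_val_add_one_eq_factorial]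
    rw [show Fin.tail (1 : Fin (r + 1) → ℝ) = 1 from rfl, ih]
    push_cast
    ring

lemma sum_Icc_zero_one_add_single {r : ℕ} (t j : Fin (r + 1)) :
    ∑ i ∈ Icc 0 j, (1 + Pi.single t 1 : Fin (r + 1) → ℝ) i = j + 1 + if t ≤ j then 1 else 0 := by
  simp [sum_add_distrib, Fin.card_Icc, sum_pi_single']

-- In fact `a_s(𝟙 + e_t) = (s + 1).choose (t + 1)`, the dimension of a fundamental representation.
lemma add_one_mul_crconst_le_hpoly_one_add_single (s : ℕ) (t : Fin s) :
    ((s : ℝ) + 1) * crconst s ≤ hpoly s (1 + Pi.single t 1) := by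
  induction s with
  | zero => exact t.elim0
  | succ s ih =>
    rw [hpoly_succ, crconst_succ]
    simp only [sum_Icc_zero_one_add_single]
    induction t using Fin.cases with
    | zero =>
      have htail : Fin.tail (1 + Pi.single 0 1 : Fin (s + 1) → ℝ) = 1 := by
        ext i
        simp [Fin.tail, Fin.succ_ne_zero]
      have hrow : ∏ j : Fin (s + 1), ((j : ℝ) + 1 + if 0 ≤ j then 1 else 0) = (s + 2)! := by
        rw [← prod_fin_val_add_one_eq_factorial (s + 2), Fin.prod_univ_succ (fun j : Fin (s + 2) => (j : ℝ) + 1)]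
        simp only [Fin.zero_le, if_true, Fin.val_zero, Fin.val_succ]
        push_cast
        ring
      rw [htail, hpoly_one, hrow, factorial_succ (s + 1)]
      push_cast
      exact le_of_eq (by ring)
    | succ t =>
      have htail : Fin.tail (1 + Pi.single t.succ 1 : Fin (s + 1) → ℝ) = 1 + Pi.single t 1 := by
        ext i
        simp [Fin.tail, Pi.single_apply]
      have hrow : (s ! : ℝ) * (s + 2) ≤
          ∏ j : Fin (s + 1), ((j : ℝ) + 1 + if t.succ ≤ j then 1 else 0) := by
        rw [Fin.prod_univ_castSucc, ← prod_fin_val_add_one_eq_factorial]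
        simp only [Fin.val_last, Fin.le_last, if_true, Fin.val_castSucc]
        refine mul_le_mul (prod_le_prod (fun j _ => by positivity) fun j _ => ?_) (by linarith)
          (by positivity) (prod_nonneg fun j _ => by positivity)
        split_ifs <;> linarith
      rw [htail]
      calc ((↑(s + 1) : ℝ) + 1) * ↑(crconst s * (s + 1)!)
          = (s ! * (s + 2)) * ((s + 1) * crconst s) := by
            push_cast [factorial_succ]
            ring
        _ ≤ _ := mul_le_mul hrow (ih t) (by positivity) (le_trans (by positivity) hrow)

lemma pow_le_prod_sum_Icc_zero {r : ℕ} (y : Fin (r + 1) → ℝ) (hy : 0 ≤ y) :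
    y 0 ^ (r + 1) ≤ ∏ j, ∑ i ∈ Icc 0 j, y i := by
  calc y 0 ^ (r + 1) = ∏ _j : Fin (r + 1), y 0 := by simp
    _ ≤ _ := prod_le_prod (fun _ _ => hy 0) fun j _ =>
      single_le_sum (fun i _ => hy i) (mem_Icc.mpr ⟨le_rfl, Fin.zero_le j⟩)

lemma le_apoly_cons_one_add_single (m : ℕ) (K : ℝ) (hK : 0 ≤ K) (t : Fin (m + 1)) :
    K ^ (m + 2) / (m + 1)! ≤ apoly (m + 2) (Fin.cons K (1 + Pi.single t 1)) := by
  have hy : (0 : Fin (m + 2) → ℝ) ≤ Fin.cons K (1 + Pi.single t 1) := by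
    intro i
    induction i using Fin.cases with
    | zero => simpa using hK
    | succ i =>
      simp only [Pi.zero_apply, Fin.cons_succ, Pi.add_apply, Pi.one_apply, Pi.single_apply]
      split_ifs <;> norm_num
  have hrow := pow_le_prod_sum_Icc_zero _ hy
  have htail := add_one_mul_crconst_le_hpoly_one_add_single (m + 1) t
  rw [Fin.cons_zero] at hrow
  have hc : (0 : ℝ) < ↑(crconst (m + 1) * (m + 1 + 1)!) := by
    exact_mod_cast mul_pos (crconst_pos _) (factorial_pos _)
  rw [apoly, hpoly_succ, Fin.tail_cons, crconst_succ, le_div_iff₀ hc]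
  calc K ^ (m + 2) / (m + 1)! * ↑(crconst (m + 1) * (m + 1 + 1)!)
      = K ^ (m + 2) * ((↑(m + 1) + 1) * crconst (m + 1)) := by
        push_cast [factorial_succ (m + 1)]
        field_simp
    _ ≤ _ := mul_le_mul hrow htail (by positivity) (le_trans (by positivity) hrow)

lemma Lfun_cons_single (m : ℕ) (c : ℝ) (t : Fin (m + 1)) :
    Lfun (m + 2) (Fin.cons c (Pi.single t 1)) =
      1 / 2 * ((m + 2) * c + (t + 2) * (m + 1 - t)) := by
  rw [Lfun, Fin.sum_univ_succ]
  simp [Pi.single_apply]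
  ring

lemma two_div_mul_Lfun_cons_sub_one_le (m : ℕ) (K : ℝ) (t : Fin (m + 1)) :
    2 / ((m : ℝ) + 2) *
        Lfun (m + 2) (fun i => (Fin.cons K (1 + Pi.single t 1) : Fin (m + 2) → ℝ) i - 1) ≤
      K + (m + 2) := by
  have hsub : (fun i => (Fin.cons K (1 + Pi.single t 1) : Fin (m + 2) → ℝ) i - 1) =
      Fin.cons (K - 1) (Pi.single t 1) := by
    ext i
    induction i using Fin.cases <;> simp
  have ht : (t : ℝ) ≤ m := by exact_mod_cast Nat.lt_succ_iff.mp t.isLt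
  rw [hsub, Lfun_cons_single, div_mul_eq_mul_div, div_le_iff₀ (by positivity)]
  nlinarith [(t : ℕ).cast_nonneg (α := ℝ)]

lemma exists_cast_eq_cons_one_add_single {m K : ℕ} (v : Fin (m + 2) → ℕ) (n : Fin (m + 2))
    (hn : n ≠ 0) (hv : ∀ i, v i = if i = 0 then K else if i = n then 2 else 1) :
    ∃ t : Fin (m + 1), ∀ i,
      (v i : ℝ) = (Fin.cons (K : ℝ) (1 + Pi.single t 1) : Fin (m + 2) → ℝ) i := by
  obtain ⟨t, rfl⟩ := Fin.exists_succ_eq.mpr hn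
  refine ⟨t, fun i => ?_⟩
  induction i using Fin.cases with
  | zero => simp [hv]
  | succ i =>
    simp only [hv, Fin.succ_ne_zero, Fin.succ_inj, if_false, Fin.cons_succ, Pi.add_apply,
      Pi.one_apply, Pi.single_apply]
    split_ifs <;> norm_num

theorem stmt15_general (m : ℕ) (K : ℕ) (v : Fin (m + 2) → ℕ)
    (hv : (∃ n : Fin (m + 2), n ≠ 0 ∧
            ∀ i, v i = if i = 0 then K else if i = n then 2 else 1) ∨
          (∃ n : Fin (m + 2), n ≠ Fin.last (m + 1) ∧
            ∀ i, v i = if i = Fin.last (m + 1) then K else if i = n then 2 else 1)) :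
    (K : ℝ) ^ (m + 2) / (Nat.factorial (m + 1)) ≤ apoly (m + 2) (fun i => (v i : ℝ)) ∧
    2 / ((m : ℝ) + 2) * Lfun (m + 2) (fun i => (v i : ℝ) - 1) ≤ (K : ℝ) + (m + 2) := by
  have key (t : Fin (m + 1)) := And.intro (le_apoly_cons_one_add_single m K K.cast_nonneg t)
    (two_div_mul_Lfun_cons_sub_one_le m K t)
  rcases hv with ⟨n, hn, hv⟩ | ⟨n, hn, hv⟩
  · obtain ⟨t, ht⟩ := exists_cast_eq_cons_one_add_single v n hn hv
    simpa only [ht] using key t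
  · obtain ⟨t, ht⟩ := exists_cast_eq_cons_one_add_single (K := K) (v ∘ Fin.rev) n.rev
      (by rwa [Ne, Fin.rev_eq_iff, Fin.rev_zero]) (fun i => by simp [hv, Fin.rev_eq_iff])
    have hrev (i : Fin (m + 2)) :
        (v i : ℝ) = (Fin.cons (K : ℝ) (1 + Pi.single t 1) : Fin (m + 2) → ℝ) i.rev := by
      simpa using ht i.rev
    obtain ⟨hapoly, hLfun⟩ := key t
    rw [← apoly_comp_rev] at hapoly
    rw [← Lfun_comp_rev] at hLfun
    simpa only [hrev] using And.intro hapoly hLfun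

/-- Lemma 5.3: with `r = m+2`, for `v = (K,1,…,1,2,1,…,1)` or its reverse
`(1,…,1,2,1,…,1,K)`, one has `a_r(v) ≥ K^r/(r-1)!` and `(2/r) L(v-𝟙) ≤ K + r`. -/
theorem stmt15 (m : ℕ) (K : ℕ) (hK : 1 ≤ K) (v : Fin (m + 2) → ℕ)
    (hv : (∃ n : Fin (m + 2), n ≠ 0 ∧
            ∀ i, v i = if i = 0 then K else if i = n then 2 else 1) ∨
          (∃ n : Fin (m + 2), n ≠ Fin.last (m + 1) ∧
            ∀ i, v i = if i = Fin.last (m + 1) then K else if i = n then 2 else 1)) :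
    (K : ℝ) ^ (m + 2) / (Nat.factorial (m + 1)) ≤ apoly (m + 2) (fun i => (v i : ℝ)) ∧
    2 / ((m : ℝ) + 2) * Lfun (m + 2) (fun i => (v i : ℝ) - 1) ≤ (K : ℝ) + (m + 2) :=
  stmt15_general m K v hv
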